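/- arXiv:2605.01435 — 2 statements merged into one kernel-verified Lean document; each statement's English description precedes it below -/
import Mathlib

section
/- Define a_n and b_n as in the k = 5 construction (a₁ = 6, b₁ = 12, with difference sequences c_n and d_n = c_n + 1 from the concatenated 5-fold Fibonacci-substitution words). Then {a_n : n ≥ 1} ∪ {b_n : n ≥ 1} = {6, 7, 8, …}, i.e., every integer ≥ 6 appears in exactly one of the two sequences. -/
noncomputable def phi : ℝ := (1 + Real.sqrt 5) / 2

/-- The substitution σ: 1 ↦ (2), 2 ↦ (2,1). -/
def subst : ℕ → List ℕ
  | 1 => [2]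
  | 2 => [2, 1]
  | _ => []

/-- `fibWord n` is the Fibonacci-substitution word `C_{n+1}` (so `fibWord 0 = C₁ = [1]`). -/
def fibWord : ℕ → List ℕ
  | 0 => [1]
  | n + 1 => (fibWord n).flatMap subst

/-- `cseq k n` is the `n`-th term (1-indexed) of the concatenation
    `C₁^(k) ⊎ C₂^(k) ⊎ …` of `k`-fold repetitions of the Fibonacci-substitution words. -/
def cseq (k n : ℕ) : ℕ :=
  ((List.range n).flatMap fun i => (List.replicate k (fibWord i)).flatten).getD (n - 1) 0

/-- `aseq k n = (k+1) + Σ_{i=1}^{n-1} c_i`. -/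
def aseq (k n : ℕ) : ℕ := (k + 1) + ∑ i ∈ Finset.Ico 1 n, cseq k i

/-- `bseq k n = (2k+2) + Σ_{i=1}^{n-1} (c_i + 1)`. -/
def bseq (k n : ℕ) : ℕ := (2 * k + 2) + ∑ i ∈ Finset.Ico 1 n, (cseq k i + 1)

/-! ### Auxiliary development -/

def P5 (n : ℕ) : List ℕ := (List.range n).flatMap fun i => (List.replicate 5 (fibWord i)).flatten

lemma fibWord_mem : ∀ n, fibWord n ≠ [] ∧ ∀ x ∈ fibWord n, x = 1 ∨ x = 2 := by
  intro n
  induction n with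
  | zero => simp [fibWord]
  | succ n ih =>
    obtain ⟨hne, hmem⟩ := ih
    constructor
    · cases h : fibWord n with
      | nil => exact absurd h hne
      | cons c t =>
        have hc := hmem c (by rw [h]; exact List.mem_cons_self)
        simp only [fibWord, h, List.flatMap_cons]
        rcases hc with rfl | rfl <;> simp [subst]
    · intro x hx
      simp only [fibWord, List.mem_flatMap] at hx
      obtain ⟨c, hc, hx⟩ := hx
      rcases hmem c hc with rfl | rfl <;> simp [subst] at hx <;> omega

lemma P5_mem (n : ℕ) : ∀ x ∈ P5 n, x = 1 ∨ x = 2 := by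
  intro x hx
  simp only [P5, List.mem_flatMap, List.mem_flatten, List.mem_replicate] at hx
  obtain ⟨i, _, l, ⟨_, rfl⟩, hx⟩ := hx
  exact (fibWord_mem i).2 x hx

lemma P5_succ (n : ℕ) : P5 (n+1) = P5 n ++ (List.replicate 5 (fibWord n)).flatten := by
  simp [P5, List.range_succ]

lemma length_P5 (n : ℕ) : n ≤ (P5 n).length := by
  induction n with
  | zero => simp [P5]
  | succ n ih =>
    rw [P5_succ]
    have h1 : 1 ≤ (fibWord n).length := List.length_pos_iff.mpr (fibWord_mem n).1
    simp only [List.length_append, List.length_flatten]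
    have : (List.replicate 5 (fibWord n)).map List.length = List.replicate 5 (fibWord n).length := by
      simp
    rw [this]
    simp only [List.sum_replicate, smul_eq_mul]
    omega

lemma block_subst (i : ℕ) :
    (List.replicate 5 (fibWord (i+1))).flatten = ((List.replicate 5 (fibWord i)).flatten).flatMap subst := by
  show (List.replicate 5 ((fibWord i).flatMap subst)).flatten = _
  simp [List.replicate, List.flatMap_append]

lemma P5_fix (n : ℕ) : P5 (n+1) = [1,1,1,1,1] ++ (P5 n).flatMap subst := by
  induction n with
  | zero => rfl
  | succ n ih =>
    calc P5 (n+2) = ([1,1,1,1,1] ++ (P5 n).flatMap subst)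
          ++ ((List.replicate 5 (fibWord n)).flatten).flatMap subst := by
            rw [P5_succ, ih, block_subst]
      _ = [1,1,1,1,1] ++ (P5 n ++ (List.replicate 5 (fibWord n)).flatten).flatMap subst := by
            rw [List.flatMap_append, List.append_assoc]
      _ = [1,1,1,1,1] ++ (P5 (n+1)).flatMap subst := by rw [P5_succ]

lemma subst_sum {c : ℕ} (h : c = 1 ∨ c = 2) : (subst c).sum = c + 1 := by
  rcases h with rfl | rfl <;> rfl

lemma subst_length {c : ℕ} (h : c = 1 ∨ c = 2) : (subst c).length = c := by
  rcases h with rfl | rfl <;> rfl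

lemma flatMap_sum (w : List ℕ) (h : ∀ x ∈ w, x = 1 ∨ x = 2) :
    (w.flatMap subst).sum = w.sum + w.length := by
  induction w with
  | nil => rfl
  | cons c t ih =>
    simp only [List.flatMap_cons, List.sum_append, List.sum_cons, List.length_cons]
    rw [ih (fun x hx => h x (List.mem_cons_of_mem c hx)),
      subst_sum (h c (List.mem_cons_self))]
    ring

lemma flatMap_length (w : List ℕ) (h : ∀ x ∈ w, x = 1 ∨ x = 2) :
    (w.flatMap subst).length = w.sum := by
  induction w with
  | nil => rfl
  | cons c t ih =>
    simp only [List.flatMap_cons, List.length_append, List.sum_cons]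
    rw [ih (fun x hx => h x (List.mem_cons_of_mem c hx)),
      subst_length (h c (List.mem_cons_self))]

lemma flatMap_drop (w : List ℕ) (h : ∀ x ∈ w, x = 1 ∨ x = 2) (k : ℕ) :
    (w.flatMap subst).drop ((w.take k).sum) = (w.drop k).flatMap subst := by
  induction w generalizing k with
  | nil => simp
  | cons c t ih =>
    cases k with
    | zero => simp
    | succ k =>
      have ht : ∀ x ∈ t, x = 1 ∨ x = 2 := fun x hx => h x (List.mem_cons_of_mem c hx)
      simp only [List.take_succ_cons, List.sum_cons, List.flatMap_cons]
      rcases h c (List.mem_cons_self) with rfl | rfl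
      · show List.drop (1 + (t.take k).sum) (2 :: t.flatMap subst) = _
        rw [Nat.add_comm, List.drop_succ_cons]
        exact ih ht k
      · show List.drop (2 + (t.take k).sum) (2 :: 1 :: t.flatMap subst) = _
        have : 2 + (t.take k).sum = (t.take k).sum + 1 + 1 := by omega
        rw [this, List.drop_succ_cons, List.drop_succ_cons]
        exact ih ht k

lemma flatMap_take (w : List ℕ) (h : ∀ x ∈ w, x = 1 ∨ x = 2) (k : ℕ) :
    (w.flatMap subst).take ((w.take k).sum) = (w.take k).flatMap subst := by
  induction w generalizing k with
  | nil => simp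
  | cons c t ih =>
    cases k with
    | zero => simp
    | succ k =>
      have ht : ∀ x ∈ t, x = 1 ∨ x = 2 := fun x hx => h x (List.mem_cons_of_mem c hx)
      simp only [List.take_succ_cons, List.sum_cons, List.flatMap_cons]
      rcases h c (List.mem_cons_self) with rfl | rfl
      · show List.take (1 + (t.take k).sum) (2 :: t.flatMap subst) = 2 :: (t.take k).flatMap subst
        rw [Nat.add_comm, List.take_succ_cons, ih ht k]
      · show List.take (2 + (t.take k).sum) (2 :: 1 :: t.flatMap subst)
            = 2 :: 1 :: (t.take k).flatMap subst
        have : 2 + (t.take k).sum = (t.take k).sum + 1 + 1 := by omega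
        rw [this, List.take_succ_cons, List.take_succ_cons, ih ht k]

lemma P5_prefix {n N : ℕ} (h : n ≤ N) : ∃ s, P5 N = P5 n ++ s := by
  induction N, h using Nat.le_induction with
  | base => exact ⟨[], by simp⟩
  | succ N _ ih =>
    obtain ⟨s, hs⟩ := ih
    exact ⟨s ++ (List.replicate 5 (fibWord N)).flatten, by
      rw [P5_succ, hs, List.append_assoc]⟩

lemma cseq_getD {n N : ℕ} (h1 : 1 ≤ n) (h2 : n ≤ N) : cseq 5 n = (P5 N).getD (n-1) 0 := by
  obtain ⟨s, hs⟩ := P5_prefix h2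
  have hlt : n - 1 < (P5 n).length := lt_of_lt_of_le (by omega) (length_P5 n)
  show (P5 n).getD (n-1) 0 = _
  rw [hs, List.getD_append _ _ _ _ hlt]

lemma sum_getD (l : List ℕ) : ∀ j, j ≤ l.length →
    ∑ i ∈ Finset.range j, l.getD i 0 = (l.take j).sum := by
  intro j hj
  induction j with
  | zero => simp
  | succ j ih =>
    rw [Finset.sum_range_succ, ih (by omega), List.sum_take_succ _ _ (by omega),
      List.getD_eq_getElem _ _ (by omega)]

/-- Prefix sums of the `c` sequence. -/
def Sc (n : ℕ) : ℕ := ∑ i ∈ Finset.Ico 1 n, cseq 5 i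

lemma aseq_eq (n : ℕ) : aseq 5 n = 6 + Sc n := by
  simp [aseq, Sc]

lemma Sc_eq {n N : ℕ} (h1 : 1 ≤ n) (h2 : n ≤ N) : Sc n = ((P5 N).take (n-1)).sum := by
  unfold Sc
  rw [Finset.sum_Ico_eq_sum_range]
  have hlen : n - 1 ≤ (P5 N).length := le_trans (by omega) (length_P5 N)
  rw [← sum_getD (P5 N) (n-1) hlen]
  apply Finset.sum_congr rfl
  intro i hi
  simp only [Finset.mem_range] at hi
  rw [cseq_getD (by omega) (show 1 + i ≤ N by omega)]
  congr 1
  omega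

lemma key {n : ℕ} (h1 : 1 ≤ n) :
    cseq 5 (aseq 5 n) = 2 ∧
    (cseq 5 n = 2 → cseq 5 (aseq 5 n + 1) = 1) ∧
    Sc (aseq 5 n) = 5 + Sc n + (n - 1) := by
  set N := n + aseq 5 n with hNdef
  have hnN : n ≤ N := Nat.le_add_right n _
  have haN : aseq 5 n ≤ N := Nat.le_add_left _ n
  have hw : ∀ x ∈ P5 N, x = 1 ∨ x = 2 := P5_mem N
  have hs : Sc n = ((P5 N).take (n-1)).sum := Sc_eq h1 hnN
  have hlen : n - 1 < (P5 N).length := lt_of_lt_of_le (by omega) (length_P5 N)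
  have ha : aseq 5 n = 6 + Sc n := aseq_eq n
  have ha1 : 1 ≤ aseq 5 n := by omega
  -- decomposition of P5 (N+1)
  have htk := flatMap_take (P5 N) hw (n-1)
  have hdr := flatMap_drop (P5 N) hw (n-1)
  set A := ((P5 N).take (n-1)).flatMap subst with hAdef
  set B := ((P5 N).drop (n-1)).flatMap subst with hBdef
  have hQ : (P5 N).flatMap subst = A ++ B := by
    rw [← List.take_append_drop (((P5 N).take (n-1)).sum) ((P5 N).flatMap subst), htk, hdr]
  have hdecomp : P5 (N+1) = ([1,1,1,1,1] ++ A) ++ B := by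
    rw [P5_fix, hQ, List.append_assoc]
  have hA : ∀ x ∈ (P5 N).take (n-1), x = 1 ∨ x = 2 :=
    fun x hx => hw x (List.mem_of_mem_take hx)
  have hAlen : ([1,1,1,1,1] ++ A).length = 5 + Sc n := by
    rw [List.length_append, flatMap_length _ hA, ← hs]
    rfl
  -- B starts with subst of the n-th letter
  have hdropc : (P5 N).drop (n-1) = (P5 N)[n-1] :: (P5 N).drop (n-1+1) :=
    List.drop_eq_getElem_cons hlen
  have hc : (P5 N)[n-1] = 1 ∨ (P5 N)[n-1] = 2 := hw _ (List.getElem_mem hlen)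
  have hcn : cseq 5 n = (P5 N)[n-1] := by
    rw [cseq_getD h1 hnN, List.getD_eq_getElem _ _ hlen]
  have hB : B = subst ((P5 N)[n-1]) ++ ((P5 N).drop (n-1+1)).flatMap subst := by
    rw [hBdef, hdropc, List.flatMap_cons]
  constructor
  · -- cseq 5 (aseq 5 n) = 2
    rw [cseq_getD ha1 (by omega : aseq 5 n ≤ N + 1), hdecomp,
      List.getD_append_right _ _ _ _ (by omega : ([1,1,1,1,1] ++ A).length ≤ aseq 5 n - 1)]
    have : aseq 5 n - 1 - ([1,1,1,1,1] ++ A).length = 0 := by omega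
    rw [this, hB]
    rcases hc with h | h <;> rw [h] <;> rfl
  constructor
  · -- second letter is 1 when the n-th letter is 2
    intro h2
    rw [hcn] at h2
    rw [cseq_getD (by omega) (by omega : aseq 5 n + 1 ≤ N + 1), hdecomp,
      List.getD_append_right _ _ _ _ (by omega : ([1,1,1,1,1] ++ A).length ≤ aseq 5 n + 1 - 1)]
    have : aseq 5 n + 1 - 1 - ([1,1,1,1,1] ++ A).length = 1 := by omega
    rw [this, hB, h2]
    rfl
  · -- prefix sum identity
    have htake : (P5 (N+1)).take (aseq 5 n - 1) = [1,1,1,1,1] ++ A := by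
      rw [hdecomp]
      exact List.take_left' (by omega)
    rw [Sc_eq ha1 (by omega : aseq 5 n ≤ N + 1), htake, List.sum_append,
      flatMap_sum _ hA, ← hs, List.length_take]
    have : min (n-1) (P5 N).length = n - 1 := by omega
    rw [this]
    show 5 + (Sc n + (n-1)) = 5 + Sc n + (n-1)
    omega

lemma c_bounds {n : ℕ} (h1 : 1 ≤ n) : cseq 5 n = 1 ∨ cseq 5 n = 2 := by
  have hlen : n - 1 < (P5 n).length := lt_of_lt_of_le (by omega) (length_P5 n)
  rw [cseq_getD h1 (le_refl n), List.getD_eq_getElem _ _ hlen]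
  exact P5_mem n _ (List.getElem_mem hlen)

lemma a_succ {n : ℕ} (h : 1 ≤ n) : aseq 5 (n+1) = aseq 5 n + cseq 5 n := by
  unfold aseq
  rw [Finset.sum_Ico_succ_top h]
  ring

lemma a_mono {n m : ℕ} (h1 : 1 ≤ n) (h : n < m) : aseq 5 n < aseq 5 m := by
  induction m, h using Nat.le_induction with
  | base =>
    show aseq 5 n < aseq 5 (n+1)
    have := a_succ h1
    rcases c_bounds h1 with h | h <;> omega
  | succ m hm ih =>
    have hm1 : 1 ≤ m := by omega
    have := a_succ hm1
    rcases c_bounds hm1 with h | h <;> omega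

lemma a_one : aseq 5 1 = 6 := by simp [aseq]

lemma b_eq {n : ℕ} (h : 1 ≤ n) : bseq 5 n = aseq 5 (aseq 5 n) + 1 := by
  have hk := (key h).2.2
  have hb : bseq 5 n = 12 + Sc n + (n-1) := by
    unfold bseq Sc
    rw [Finset.sum_add_distrib, Finset.sum_const, Nat.card_Ico, smul_eq_mul, mul_one]
    have : (1:ℕ) ≤ n := h
    generalize (∑ i ∈ Finset.Ico 1 n, cseq 5 i) = S
    omega
  rw [hb, aseq_eq (aseq 5 n), hk]
  omega

lemma c_small {m : ℕ} (h1 : 1 ≤ m) (h2 : m ≤ 5) : cseq 5 m = 1 := by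
  interval_cases m <;> rfl

lemma bracket {m : ℕ} (hm : 6 ≤ m) : ∃ k, 1 ≤ k ∧ aseq 5 k ≤ m ∧ m < aseq 5 (k+1) := by
  induction m with
  | zero => omega
  | succ m ih =>
    by_cases h6 : 6 ≤ m
    · obtain ⟨k, hk1, hk2, hk3⟩ := ih h6
      by_cases h : m + 1 < aseq 5 (k+1)
      · exact ⟨k, hk1, by omega, h⟩
      · refine ⟨k+1, by omega, by omega, ?_⟩
        have h4 := a_succ (show 1 ≤ k+1 by omega)
        rcases c_bounds (show 1 ≤ k+1 by omega) with hc | hc <;> omega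
    · have hm6 : m + 1 = 6 := by omega
      refine ⟨1, le_refl 1, by rw [hm6, a_one], ?_⟩
      have := a_succ (le_refl 1)
      rw [c_small (le_refl 1) (by omega)] at this
      rw [hm6, this, a_one]
      omega

lemma two_mem {m : ℕ} (h1 : 1 ≤ m) (h2 : cseq 5 m = 2) : ∃ k, 1 ≤ k ∧ aseq 5 k = m := by
  by_cases hm : m ≤ 5
  · rw [c_small h1 hm] at h2; omega
  obtain ⟨k, hk1, hk2, hk3⟩ := bracket (show 6 ≤ m by omega)
  have hsucc := a_succ hk1
  rcases eq_or_lt_of_le hk2 with heq | hlt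
  · exact ⟨k, hk1, heq⟩
  exfalso
  have hck : cseq 5 k = 2 := by rcases c_bounds hk1 with h | h <;> omega
  have hma : m = aseq 5 k + 1 := by omega
  have := (key hk1).2.1 hck
  rw [← hma] at this
  omega

theorem stmt12 :
    ({x | ∃ n, 1 ≤ n ∧ aseq 5 n = x} ∪ {x | ∃ n, 1 ≤ n ∧ bseq 5 n = x}) = {x : ℕ | 6 ≤ x} ∧
    ∀ x : ℕ, ¬((∃ n, 1 ≤ n ∧ aseq 5 n = x) ∧ (∃ n, 1 ≤ n ∧ bseq 5 n = x)) := by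
  have a_ge : ∀ n, 1 ≤ n → 6 ≤ aseq 5 n := by
    intro n hn
    rw [aseq_eq]; omega
  constructor
  · ext x
    simp only [Set.mem_union, Set.mem_setOf_eq]
    constructor
    · rintro (⟨n, hn, rfl⟩ | ⟨n, hn, rfl⟩)
      · exact a_ge n hn
      · rw [b_eq hn]
        have := a_ge (aseq 5 n) (by have := a_ge n hn; omega)
        omega
    · intro hx
      induction x, hx using Nat.le_induction with
      | base => exact Or.inl ⟨1, le_refl 1, a_one⟩
      | succ x hx ih =>
        rcases ih with ⟨n, hn, rfl⟩ | ⟨n, hn, rfl⟩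
        · rcases c_bounds hn with hc | hc
          · left
            exact ⟨n+1, by omega, by rw [a_succ hn, hc]⟩
          · obtain ⟨k, hk1, hk2⟩ := two_mem hn hc
            right
            refine ⟨k, hk1, ?_⟩
            rw [b_eq hk1, hk2]
        · left
          have hj : 1 ≤ aseq 5 n := by have := a_ge n hn; omega
          have hcj := (key hn).1
          refine ⟨aseq 5 n + 1, by omega, ?_⟩
          rw [a_succ hj, hcj, b_eq hn]
  · rintro x ⟨⟨n, hn, rfl⟩, ⟨k, hk, hbk⟩⟩
    rw [b_eq hk] at hbk
    have hj : 1 ≤ aseq 5 k := by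
      have := a_ge k hk; omega
    have hcj := (key hk).1
    have hsucc := a_succ hj
    rw [hcj] at hsucc
    rcases lt_trichotomy n (aseq 5 k) with h | h | h
    · have := a_mono hn h; omega
    · rw [h] at hbk; omega
    · rcases eq_or_lt_of_le (Nat.succ_le_of_lt h) with heq | hlt
      · have hn' : n = aseq 5 k + 1 := by omega
        rw [hn'] at hbk
        omega
      · have := a_mono (show 1 ≤ aseq 5 k + 1 by omega) hlt
        omega
end

section
/- With a_n as in the k = 5 construction, for all n ≥ 1, 0 ≤ h ≤ 4, and 1 ≤ t ≤ F_n: a_{5(F_{n+1}−1)+hF_n+t+1} = 5F_{n+2} − 4 + hF_{n+1} + ⌊(F_{n+1}+1+t)φ⌋ − ⌊(F_{n+1}+1)φ⌋, where φ = (1+√5)/2. -/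
lemma mem_fibWord : ∀ n c, c ∈ fibWord n → c = 1 ∨ c = 2 := by
  intro n
  induction n with
  | zero => intro c hc; simp [fibWord] at hc; exact Or.inl hc
  | succ n ih =>
    intro c hc
    simp only [fibWord, List.mem_flatMap] at hc
    obtain ⟨a, ha, hc⟩ := hc
    rcases ih a ha with rfl | rfl <;> simp [subst] at hc <;> omega

lemma fibWord_append : ∀ n, fibWord (n+2) = fibWord (n+1) ++ fibWord n := by
  intro n
  induction n with
  | zero => decide
  | succ n ih =>
    conv_lhs => rw [show fibWord (n+3) = (fibWord (n+2)).flatMap subst from rfl, ih,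
      List.flatMap_append]
    rfl

lemma length_sum_fibWord : ∀ n, (fibWord n).length = Nat.fib (n+1) ∧ (fibWord n).sum = Nat.fib (n+2) := by
  have key : ∀ l : List ℕ, (∀ c ∈ l, c = 1 ∨ c = 2) →
      (l.flatMap subst).length = l.sum ∧ (l.flatMap subst).sum = l.sum + l.length := by
    intro l hl
    induction l with
    | nil => simp
    | cons a l ih =>
      have ha := hl a (by simp)
      have ih' := ih (fun c hc => hl c (by simp [hc]))
      rcases ha with rfl | rfl <;>
        simp [List.flatMap_cons, subst, ih'.1, ih'.2] <;> omega
  intro n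
  induction n with
  | zero => simp [fibWord]
  | succ n ih =>
    have k := key (fibWord n) (mem_fibWord n)
    constructor
    · show (List.flatMap subst (fibWord n)).length = _
      rw [k.1, ih.2]
    · show (List.flatMap subst (fibWord n)).sum = _
      show (List.flatMap subst (fibWord n)).sum = Nat.fib (n + 3)
      rw [k.2, ih.2, ih.1]
      have h1 : Nat.fib (n+3) = Nat.fib (n+1) + Nat.fib (n+2) := Nat.fib_add_two
      omega

lemma length_fibWord (n : ℕ) : (fibWord n).length = Nat.fib (n+1) := (length_sum_fibWord n).1
lemma sum_fibWord (n : ℕ) : (fibWord n).sum = Nat.fib (n+2) := (length_sum_fibWord n).2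

lemma fibWord_prefix : ∀ m, 1 ≤ m → fibWord m <+: fibWord (m+1) := by
  rintro (_|m) h
  · omega
  · rw [fibWord_append]; exact List.prefix_append _ _

lemma fibWord_prefix' : ∀ m m', 1 ≤ m → m ≤ m' → fibWord m <+: fibWord m' := by
  intro m m' hm h
  induction m' with
  | zero => omega
  | succ m' ih =>
    rcases Nat.lt_or_ge m (m'+1) with h' | h'
    · exact (ih (by omega)).trans (fibWord_prefix m' (by omega))
    · have : m = m' + 1 := by omega
      subst this; rfl

lemma sqrt5_sq : Real.sqrt 5 ^ 2 = 5 := Real.sq_sqrt (by norm_num)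

lemma sqrt5_gt : 2 < Real.sqrt 5 := by
  have := Real.lt_sqrt (x := 2) (y := 5) (by norm_num)
  rw [this]; norm_num

lemma sqrt5_lt : Real.sqrt 5 < 7/3 := by
  rw [show (7:ℝ)/3 = Real.sqrt ((7/3)^2) from (Real.sqrt_sq (by norm_num)).symm]
  apply Real.sqrt_lt_sqrt (by norm_num)
  norm_num

lemma phi_gt : 3/2 < phi := by unfold phi; nlinarith [sqrt5_gt]
lemma phi_lt : phi < 5/3 := by unfold phi; nlinarith [sqrt5_lt]
lemma phi_sq : phi^2 = phi + 1 := by unfold phi; nlinarith [sqrt5_sq]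
lemma phi_pos : (0:ℝ) < phi := by linarith [phi_gt]
lemma B_pos : (0:ℝ) < phi - 1 := by nlinarith [phi_gt]
lemma B_lt : phi - 1 < 2/3 := by nlinarith [phi_lt]
lemma Bphi : (phi - 1) * phi = 1 := by nlinarith [phi_sq]
lemma phiB2 : phi * (phi-1)^2 = phi - 1 := by nlinarith [Bphi]

lemma one_sub_phi_pow (j : ℕ) : (1-phi)^j = (-1)^j * (phi-1)^j := by
  rw [show (1-phi) = (-1) * (phi-1) by ring, mul_pow]

lemma Bpow_pos (n : ℕ) : 0 < (phi-1)^n := pow_pos B_pos n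

lemma Bpow_mono {a c : ℕ} (h : a ≤ c) : (phi-1)^c ≤ (phi-1)^a :=
  pow_le_pow_of_le_one B_pos.le (by linarith [B_lt]) h

lemma phiB_shift (n : ℕ) : phi * (phi-1)^(n+1) = (phi-1)^n := by
  rw [pow_succ, show phi * ((phi-1)^n * (phi-1)) = (phi-1)^n * ((phi-1)*phi) by ring, Bphi,
    mul_one]

lemma Bpow_phi (n : ℕ) : (phi-1)^n + (phi-1)^(n+1) = phi * (phi-1)^n := by
  rw [pow_succ]; ring

lemma Bpow_split (n : ℕ) : (phi-1)^(n+1) + (phi-1)^(n+2) = (phi-1)^n := by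
  have h : (phi-1) + (phi-1)^2 = 1 := by nlinarith [phi_sq]
  calc (phi-1)^(n+1) + (phi-1)^(n+2) = (phi-1)^n * ((phi-1) + (phi-1)^2) := by ring
    _ = (phi-1)^n := by rw [h, mul_one]

lemma fib_phi : ∀ k : ℕ, (Nat.fib k : ℝ) * phi = (Nat.fib (k+1) : ℝ) - (1 - phi)^k := by
  have key : ∀ k : ℕ, ((Nat.fib k : ℝ) * phi = (Nat.fib (k+1) : ℝ) - (1 - phi)^k) ∧
      ((Nat.fib (k+1) : ℝ) * phi = (Nat.fib (k+2) : ℝ) - (1 - phi)^(k+1)) := by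
    intro k
    induction k with
    | zero =>
      refine ⟨by norm_num [Nat.fib], ?_⟩
      show (Nat.fib 1 : ℝ) * phi = (Nat.fib 2 : ℝ) - (1-phi)^1
      norm_num [Nat.fib]
    | succ k ih =>
      refine ⟨ih.2, ?_⟩
      have h2 : (Nat.fib (k+3) : ℝ) = Nat.fib (k+1) + Nat.fib (k+2) := by
        rw [show k+3 = (k+1)+2 from rfl, Nat.fib_add_two]; push_cast; ring
      have h3 : (Nat.fib (k+2) : ℝ) = Nat.fib k + Nat.fib (k+1) := by
        rw [Nat.fib_add_two]; push_cast; ring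
      have hb : (1-phi)^(k+2) = (1-phi)^k + (1-phi)^(k+1) := by
        have hp : (1-phi)^(k+1) = (1-phi)^k*(1-phi) := pow_succ _ _
        have hp2 : (1-phi)^(k+2) = (1-phi)^(k+1)*(1-phi) := pow_succ _ _
        rw [hp2, hp]
        linear_combination (1-phi)^k * phi_sq
      have e1 := ih.1
      have e2 := ih.2
      rw [h3, h2]
      rw [h3] at e2
      linarith [e1, e2, hb]
  exact fun k => (key k).1

lemma exists_fib_interval (m : ℕ) (hm : 1 ≤ m) :
    ∃ j, 2 ≤ j ∧ Nat.fib j ≤ m ∧ m < Nat.fib (j+1) := by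
  induction m with
  | zero => omega
  | succ m ih =>
    rcases Nat.lt_or_ge m 1 with h | h
    · have : m = 0 := by omega
      subst this
      exact ⟨2, by omega, by decide, by decide⟩
    · obtain ⟨j, hj2, hj1, hjlt⟩ := ih h
      rcases Nat.lt_or_ge (m+1) (Nat.fib (j+1)) with h' | h'
      · exact ⟨j, hj2, by omega, h'⟩
      · have he : m + 1 = Nat.fib (j+1) := by omega
        refine ⟨j+1, by omega, by omega, ?_⟩
        have h2 : Nat.fib (j+1+1) = Nat.fib j + Nat.fib (j+1) := Nat.fib_add_two
        have h3 : 1 ≤ Nat.fib j := Nat.fib_pos.mpr (by omega)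
        omega

lemma keyZ : ∀ m : ℕ, 1 ≤ m → ∀ j : ℕ, 2 ≤ j → Nat.fib j ≤ m → m < Nat.fib (j+1) →
    ∃ (p : ℤ) (i : ℕ), 2 ≤ i ∧ i ≤ j ∧
      ((i = j ∧ (-1:ℝ)^(i+1) * ((m:ℝ)*phi - p) = (phi-1)^j) ∨
       ((phi-1)^i - phi*((phi-1)^(i+3) - (phi-1)^(j+1+((j-i) % 2))) ≤
          (-1:ℝ)^(i+1) * ((m:ℝ)*phi - p) ∧
        (-1:ℝ)^(i+1) * ((m:ℝ)*phi - p) ≤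
          (phi-1)^i + phi*(phi-1)^(i+2) - (phi-1)^(j+1))) := by
  intro m
  induction m using Nat.strong_induction_on with
  | _ m IH =>
    intro hm j hj2 hfj hfj1
    rcases Nat.eq_or_lt_of_le hfj with heq | hlt
    · refine ⟨(Nat.fib (j+1) : ℤ), j, hj2, le_refl j, Or.inl ⟨rfl, ?_⟩⟩
      rw [show ((m:ℝ)) = (Nat.fib j : ℝ) by rw [← heq], fib_phi j, one_sub_phi_pow]
      push_cast
      rcases Nat.even_or_odd j with hpar | hpar
      · rw [hpar.neg_one_pow]
        have hh : (-1:ℝ)^(j+1) = -1 := by rw [pow_succ, hpar.neg_one_pow]; ring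
        rw [hh]; ring
      · rw [hpar.neg_one_pow]
        have hh : (-1:ℝ)^(j+1) = 1 := by rw [pow_succ, hpar.neg_one_pow]; ring
        rw [hh]; ring
    · -- inductive step
      have hfibpos : 1 ≤ Nat.fib j := Nat.fib_pos.mpr (by omega)
      set m' := m - Nat.fib j with hm'def
      have hm'1 : 1 ≤ m' := by omega
      have hmm : m' + Nat.fib j = m := by omega
      have hfj1' : Nat.fib (j+1) = Nat.fib (j-1) + Nat.fib j := by
        have h := Nat.fib_add_two (n := j - 1)
        have hj : j - 1 + 2 = j + 1 := by omega
        have hj' : j - 1 + 1 = j := by omega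
        rw [hj, hj'] at h
        omega
      have hm'lt : m' < Nat.fib (j-1) := by omega
      obtain ⟨j', hj'2, hj'f, hj'lt⟩ := exists_fib_interval m' hm'1
      have hj'j : j' + 2 ≤ j := by
        by_contra hcon
        have h1 : j - 1 ≤ j' := by omega
        have := Nat.fib_mono h1
        omega
      obtain ⟨p', i, hi2, hij', hdisj⟩ := IH m' (by omega) hm'1 j' hj'2 hj'f hj'lt
      have hij : i + 2 ≤ j := by omega
      refine ⟨p' + (Nat.fib (j+1) : ℤ), i, hi2, by omega, Or.inr ?_⟩
      have hfjr : (Nat.fib j : ℝ) * phi = (Nat.fib (j+1) : ℝ) - (-1)^j * (phi-1)^j := by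
        rw [fib_phi j, one_sub_phi_pow]
      have hx : (-1:ℝ)^(i+1) * ((m:ℝ)*phi - ((p' + (Nat.fib (j+1):ℤ) : ℤ):ℝ))
          = (-1:ℝ)^(i+1) * ((m':ℝ)*phi - (p':ℝ)) + (-1:ℝ)^(i+j) * (phi-1)^j := by
        have hc : (m:ℝ) = (m':ℝ) + (Nat.fib j : ℝ) := by exact_mod_cast hmm.symm
        rw [hc]
        push_cast
        linear_combination (-1:ℝ)^(i+1) * hfjr
      -- prepared facts
      have F2 : phi * (phi-1)^(j+2) = (phi-1)^(j+1) := phiB_shift (j+1)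
      have F3 : (phi-1)^j + (phi-1)^(j+1) = phi * (phi-1)^j := Bpow_phi j
      have F4 : phi * (phi-1)^(j'+2) = (phi-1)^(j'+1) := phiB_shift (j'+1)
      have P1 : 0 < phi*(phi-1)^(i+3) := mul_pos phi_pos (Bpow_pos _)
      have G0 : phi * (phi-1)^j ≤ phi * (phi-1)^(i+2) :=
        mul_le_mul_of_nonneg_left (Bpow_mono (by omega)) phi_pos.le
      have G1 : phi * (phi-1)^j ≤ phi * (phi-1)^(j'+2) :=
        mul_le_mul_of_nonneg_left (Bpow_mono (by omega)) phi_pos.le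
      have Mj : (phi-1)^(j+1) ≤ (phi-1)^j := Bpow_mono (by omega)
      rcases Nat.even_or_odd (i+j) with hpar | hpar
      · -- e = + b^j
        have hmod : (j - i) % 2 = 0 := by
          have := Nat.even_iff.mp hpar; omega
        have he : (-1:ℝ)^(i+j) * (phi-1)^j = (phi-1)^j := by
          rw [hpar.neg_one_pow, one_mul]
        rw [hmod]
        have hAA : phi * ((phi-1)^(i+3) - (phi-1)^(j+1+0)) =
            phi*(phi-1)^(i+3) - (phi-1)^j := by
          rw [mul_sub, show j+1+0 = j+1 from rfl, phiB_shift j]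
        constructor
        · -- lower bound
          rcases hdisj with ⟨hieq, hbase⟩ | ⟨hlow', hup'⟩
          · subst hieq
            linarith [hx, he, hbase, hAA, P1]
          · have hd' : phi * ((phi-1)^(i+3) - (phi-1)^(j'+1+((j'-i)%2))) =
                phi*(phi-1)^(i+3) - phi*(phi-1)^(j'+1+((j'-i)%2)) := mul_sub _ _ _
            have PE : 0 < phi*(phi-1)^(j'+1+((j'-i)%2)) := mul_pos phi_pos (Bpow_pos _)
            linarith [hx, he, hlow', hd', hAA, PE]
        · -- upper bound
          rcases hdisj with ⟨hieq, hbase⟩ | ⟨hlow', hup'⟩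
          · subst hieq
            linarith [hx, he, hbase, F3, G0]
          · linarith [hx, he, hup', F3, G1, F4]
      · -- e = - b^j
        have hmod : (j - i) % 2 = 1 := by
          have := Nat.odd_iff.mp hpar; omega
        have hij3 : i + 3 ≤ j := by omega
        have he : (-1:ℝ)^(i+j) * (phi-1)^j = -(phi-1)^j := by
          rw [hpar.neg_one_pow]; ring
        rw [hmod]
        have hAA : phi * ((phi-1)^(i+3) - (phi-1)^(j+1+1)) =
            phi*(phi-1)^(i+3) - (phi-1)^(j+1) := by
          rw [mul_sub, show j+1+1 = j+2 from rfl, F2]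
        have G2 : phi * (phi-1)^j ≤ phi * (phi-1)^(i+3) :=
          mul_le_mul_of_nonneg_left (Bpow_mono (by omega)) phi_pos.le
        constructor
        · rcases hdisj with ⟨hieq, hbase⟩ | ⟨hlow', hup'⟩
          · subst hieq
            linarith [hx, he, hbase, hAA, F3, G2]
          · have hd' : phi * ((phi-1)^(i+3) - (phi-1)^(j'+1+((j'-i)%2))) =
                phi*(phi-1)^(i+3) - phi*(phi-1)^(j'+1+((j'-i)%2)) := mul_sub _ _ _
            have GE : phi * (phi-1)^j ≤ phi * (phi-1)^(j'+1+((j'-i)%2)) :=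
              mul_le_mul_of_nonneg_left (Bpow_mono (by omega)) phi_pos.le
            linarith [hx, he, hlow', hd', hAA, F3, GE]
        · rcases hdisj with ⟨hieq, hbase⟩ | ⟨hlow', hup'⟩
          · subst hieq
            have PP : 0 < phi*(phi-1)^(i+2) := mul_pos phi_pos (Bpow_pos _)
            linarith [hx, he, hbase, Mj, PP]
          · have MJ : (phi-1)^(j+1) ≤ (phi-1)^(j'+1) := Bpow_mono (by omega)
            linarith [hx, he, hup', Mj, MJ, Bpow_pos j]

lemma keyZ' (k : ℕ) (hk : 3 ≤ k) (m : ℕ) (hm : 1 ≤ m) (hmk : m ≤ Nat.fib k) :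
    ∃ (p : ℤ) (i : ℕ), 2 ≤ i ∧ i ≤ k ∧
      (phi-1)^(i+1) < (-1:ℝ)^(i+1) * ((m:ℝ)*phi - p) ∧
      (-1:ℝ)^(i+1) * ((m:ℝ)*phi - p) ≤ (phi-1)^i + (phi-1)^(i+1) := by
  obtain ⟨j, hj2, hjf, hjlt⟩ := exists_fib_interval m hm
  have hjk : j ≤ k := by
    by_contra hcon
    have h1 : k + 1 ≤ j := by omega
    have h2 := Nat.fib_mono h1
    have h3 : Nat.fib k < Nat.fib (k+1) := Nat.fib_lt_fib_succ (by omega)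
    omega
  obtain ⟨p, i, hi2, hij, hd⟩ := keyZ m hm j hj2 hjf hjlt
  refine ⟨p, i, hi2, by omega, ?_, ?_⟩
  · rcases hd with ⟨hieq, hbase⟩ | ⟨hlow, hup⟩
    · subst hieq
      rw [hbase]
      have : (phi-1)^(i+1) = (phi-1)^i * (phi-1) := pow_succ _ _
      nlinarith [Bpow_pos i, B_pos, B_lt]
    · have h1 : phi * (phi-1)^(i+3) = (phi-1)^(i+2) := phiB_shift (i+2)
      have h2 : (phi-1)^(i+1) + (phi-1)^(i+2) = (phi-1)^i := Bpow_split i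
      have h3 : 0 < phi * (phi-1)^(j+1+((j-i)%2)) := mul_pos phi_pos (Bpow_pos _)
      have h4 : phi * ((phi-1)^(i+3) - (phi-1)^(j+1+((j-i)%2))) =
          phi*(phi-1)^(i+3) - phi*(phi-1)^(j+1+((j-i)%2)) := mul_sub _ _ _
      linarith [hlow]
  · rcases hd with ⟨hieq, hbase⟩ | ⟨hlow, hup⟩
    · subst hieq
      rw [hbase]
      linarith [Bpow_pos (i+1)]
    · have h1 : phi * (phi-1)^(i+2) = (phi-1)^(i+1) := phiB_shift (i+1)
      linarith [hup, Bpow_pos (j+1)]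

lemma B_sum_lt : (phi-1)^2 + (phi-1)^3 ≤ phi - 1 := by
  have h := Bpow_split 1
  norm_num at h
  linarith

lemma floor_aux (k : ℕ) (hk : 3 ≤ k) (m : ℕ) (hm : 1 ≤ m) (hmk : m ≤ Nat.fib k) :
    ⌊(m:ℝ)*phi - (1-phi)^k⌋ = ⌊(m:ℝ)*phi⌋ := by
  obtain ⟨p, i, hi2, hik, hxl, hxu⟩ := keyZ' k hk m hm hmk
  have hble : (phi-1)^i + (phi-1)^(i+1) ≤ (phi-1)^2 + (phi-1)^3 := by
    have := Bpow_mono (show 2 ≤ i from hi2)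
    have := Bpow_mono (show 3 ≤ i+1 by omega)
    linarith
  have hxb : (-1:ℝ)^(i+1) * ((m:ℝ)*phi - p) ≤ phi - 1 := le_trans hxu (le_trans hble B_sum_lt)
  have hk3 : (phi-1)^k ≤ (phi-1)^3 := Bpow_mono hk
  have hb1 : phi - 1 < 1 := by linarith [B_lt]
  have hbk_pos : (0:ℝ) < (phi-1)^k := Bpow_pos k
  have hb3 : (phi-1) + (phi-1)^3 < 1 := by nlinarith [B_lt, B_pos]
  rcases Nat.even_or_odd i with hi | hi
  · -- i even : m*phi = p - x
    have hsign : (-1:ℝ)^(i+1) = -1 := by rw [pow_succ, hi.neg_one_pow]; ring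
    rw [hsign] at hxl hxu hxb
    have hxval : (m:ℝ)*phi = p - (-1 * ((m:ℝ)*phi - p)) := by ring
    have hfl : ⌊(m:ℝ)*phi⌋ = p - 1 := by
      rw [Int.floor_eq_iff]
      constructor
      · push_cast
        linarith [hxb]
      · push_cast
        linarith [hxl, Bpow_pos (i+1)]
    rw [hfl, Int.floor_eq_iff]
    rcases Nat.even_or_odd k with hke | hko
    · -- k even: (1-phi)^k = b^k ; need x + b^k ≤ 1
      have hfk : (1-phi)^k = (phi-1)^k := by rw [one_sub_phi_pow, hke.neg_one_pow, one_mul]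
      rw [hfk]
      constructor
      · push_cast; linarith [hxb, hk3, hb3]
      · push_cast; linarith [hxl, Bpow_pos (i+1), hbk_pos]
    · -- k odd: (1-phi)^k = -b^k ; need x - b^k > 0, i.e. x > b^k; i even, i+1 ≤ k
      have hfk : (1-phi)^k = -(phi-1)^k := by rw [one_sub_phi_pow, hko.neg_one_pow]; ring
      rw [hfk]
      have hik1 : i + 1 ≤ k := by
        rcases Nat.eq_or_lt_of_le hik with h | h
        · exfalso; subst h; simp [Nat.even_iff] at hi; simp [Nat.odd_iff] at hko; omega
        · omega
      have hkk : (phi-1)^k ≤ (phi-1)^(i+1) := Bpow_mono hik1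
      constructor
      · push_cast; linarith [hxl, hkk]
      · push_cast; linarith [hxb, hbk_pos]
  · -- i odd : m*phi = p + x
    have hsign : (-1:ℝ)^(i+1) = 1 := by rw [pow_succ, hi.neg_one_pow]; ring
    rw [hsign] at hxl hxu hxb
    rw [one_mul] at hxl hxu hxb
    have hfl : ⌊(m:ℝ)*phi⌋ = p := by
      rw [Int.floor_eq_iff]
      constructor
      · push_cast; linarith [hxl, Bpow_pos (i+1)]
      · push_cast; linarith [hxb]
    rw [hfl, Int.floor_eq_iff]
    rcases Nat.even_or_odd k with hke | hko
    · -- k even: need x ≥ b^k : i odd, i+1 ≤ k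
      have hfk : (1-phi)^k = (phi-1)^k := by rw [one_sub_phi_pow, hke.neg_one_pow, one_mul]
      rw [hfk]
      have hik1 : i + 1 ≤ k := by
        rcases Nat.eq_or_lt_of_le hik with h | h
        · exfalso; subst h; simp [Nat.odd_iff] at hi; simp [Nat.even_iff] at hke; omega
        · omega
      have hkk : (phi-1)^k ≤ (phi-1)^(i+1) := Bpow_mono hik1
      constructor
      · push_cast; linarith [hxl, hkk]
      · push_cast; linarith [hxb, hbk_pos]
    · -- k odd: need x + b^k < 1
      have hfk : (1-phi)^k = -(phi-1)^k := by rw [one_sub_phi_pow, hko.neg_one_pow]; ring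
      rw [hfk]
      constructor
      · push_cast; linarith [hxl, Bpow_pos (i+1), hbk_pos]
      · push_cast; linarith [hxb, hk3, hb3]

lemma floor_shift (k : ℕ) (hk : 3 ≤ k) (m : ℕ) (hm : 1 ≤ m) (hmk : m ≤ Nat.fib k) :
    ⌊((m:ℝ) + (Nat.fib k : ℝ)) * phi⌋ = (Nat.fib (k+1) : ℤ) + ⌊(m:ℝ)*phi⌋ := by
  have h1 : ((m:ℝ) + (Nat.fib k : ℝ)) * phi
      = ((m:ℝ)*phi - (1-phi)^k) + ((Nat.fib (k+1) : ℤ) : ℝ) := by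
    have := fib_phi k
    push_cast
    linarith [this]
  rw [h1, Int.floor_add_intCast, floor_aux k hk m hm hmk]
  ring

lemma floor_phi1 : ⌊(1:ℝ)*phi⌋ = 1 := by
  rw [Int.floor_eq_iff]
  constructor <;> push_cast <;> [linarith [phi_gt]; linarith [phi_lt]]

lemma floor_phi2 : ⌊(2:ℝ)*phi⌋ = 3 := by
  rw [Int.floor_eq_iff]
  constructor <;> push_cast <;> [linarith [phi_gt]; linarith [phi_lt]]

lemma floor_phi3 : ⌊(3:ℝ)*phi⌋ = 4 := by
  rw [Int.floor_eq_iff]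
  constructor <;> push_cast <;> [linarith [phi_gt]; linarith [phi_lt]]

lemma getD_prefix {w1 w2 : List ℕ} (hp : w1 <+: w2) {n : ℕ} (hn : n < w1.length) :
    w2.getD n 0 = w1.getD n 0 := by
  obtain ⟨s, rfl⟩ := hp
  rw [List.getD_append _ _ _ _ hn]

lemma letter : ∀ j : ℕ, ∀ m, 1 ≤ m → j < Nat.fib (m+1) →
    (((fibWord m).getD j 0 : ℕ) : ℤ) = ⌊((j:ℝ)+2)*phi⌋ - ⌊((j:ℝ)+1)*phi⌋ := by
  intro j
  induction j using Nat.strong_induction_on with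
  | _ j IH =>
    intro m hm hjm
    rcases Nat.eq_zero_or_pos j with rfl | hj1
    · have hpre : fibWord 1 <+: fibWord m := fibWord_prefix' 1 m le_rfl hm
      have h0 : (fibWord m).getD 0 0 = 2 := by
        rw [getD_prefix hpre (by decide)]
        rfl
      rw [h0]
      push_cast
      rw [show ((0:ℝ)+2) = (2:ℝ) by norm_num, show ((0:ℝ)+1) = (1:ℝ) by norm_num,
        show (2:ℝ) = (2:ℝ)*1 by norm_num]
      rw [show (2:ℝ)*1*phi = (2:ℝ)*phi by ring, show ((1:ℝ))*phi = (1:ℝ)*phi from rfl]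
      rw [floor_phi2, floor_phi1]
      norm_num
    · obtain ⟨s, hs2, hsf, hslt⟩ := exists_fib_interval j hj1
      have hsm : s ≤ m := by
        by_contra hcon
        have h1 : m + 1 ≤ s := by omega
        have := Nat.fib_mono h1
        omega
      rcases Nat.eq_or_lt_of_le hs2 with hs2' | hs3
      · -- s = 2, j = 1
        subst hs2'
        have hj : j = 1 := by
          have h21 : Nat.fib 2 = 1 := rfl
          have h31 : Nat.fib (2+1) = 2 := rfl
          omega
        subst hj
        have hm2 : 2 ≤ m := by
          by_contra hcon
          have hm1 : m = 1 := by omega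
          rw [hm1] at hjm
          have : Nat.fib (1+1) = 1 := rfl
          omega
        have hpre : fibWord 2 <+: fibWord m := fibWord_prefix' 2 m (by omega) hm2
        have h0 : (fibWord m).getD 1 0 = 1 := by
          rw [getD_prefix hpre (by rw [length_fibWord]; decide)]
          rfl
        rw [h0]
        push_cast
        rw [show ((1:ℝ)+2) = (3:ℝ) by norm_num, show ((1:ℝ)+1) = (2:ℝ) by norm_num]
        rw [show (3:ℝ) = (3:ℝ) from rfl, show (2:ℝ) = (2:ℝ) from rfl]
        rw [floor_phi3, floor_phi2]
        norm_num
      · -- s ≥ 3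
        have hs3' : 3 ≤ s := hs3
        have hpre : fibWord s <+: fibWord m := fibWord_prefix' s m (by omega) hsm
        have hjlen : j < (fibWord s).length := by rw [length_fibWord]; exact hslt
        have h0 : (fibWord m).getD j 0 = (fibWord s).getD j 0 := getD_prefix hpre hjlen
        have happ : fibWord s = fibWord (s-1) ++ fibWord (s-2) := by
          have := fibWord_append (s-2)
          rw [show s-2+2 = s by omega, show s-2+1 = s-1 by omega] at this
          exact this
        have hlen1 : (fibWord (s-1)).length = Nat.fib s := by
          rw [length_fibWord, show s-1+1 = s by omega]
        have hfsp : 1 ≤ Nat.fib s := Nat.fib_pos.mpr (by omega)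
        set j' := j - Nat.fib s with hj'def
        have hj'add : j' + Nat.fib s = j := by omega
        have h1 : (fibWord s).getD j 0 = (fibWord (s-2)).getD j' 0 := by
          rw [happ, List.getD_append_right _ _ _ _ (by rw [hlen1]; omega), hlen1, ← hj'def]
        have hfs1 : Nat.fib (s+1) = Nat.fib (s-1) + Nat.fib s := by
          have h := Nat.fib_add_two (n := s - 1)
          rw [show s-1+2 = s+1 by omega, show s-1+1 = s by omega] at h
          omega
        have hj'lt : j' < Nat.fib (s-2+1) := by
          rw [show s-2+1 = s-1 by omega]
          omega
        have hIH := IH j' (by omega) (s-2) (by omega) hj'lt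
        rw [h0, h1, hIH]
        -- now floor shifts
        have hfs2 : 1 ≤ Nat.fib (s-2) := Nat.fib_pos.mpr (by omega)
        have hfs1le : Nat.fib (s-1) + 1 ≤ Nat.fib s := by
          have h := Nat.fib_add_two (n := s - 2)
          rw [show s-2+2 = s by omega, show s-2+1 = s-1 by omega] at h
          omega
        have hb1 : j' + 1 ≤ Nat.fib s := by omega
        have hb2 : j' + 2 ≤ Nat.fib s := by omega
        have hsh1 := floor_shift s hs3' (j'+1) (by omega) hb1
        have hsh2 := floor_shift s hs3' (j'+2) (by omega) hb2
        have hc1 : ((j:ℝ)+1) = ((j'+1 : ℕ):ℝ) + (Nat.fib s : ℝ) := by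
          push_cast [← hj'add]; ring
        have hc2 : ((j:ℝ)+2) = ((j'+2 : ℕ):ℝ) + (Nat.fib s : ℝ) := by
          push_cast [← hj'add]; ring
        rw [hc1, hc2, hsh1, hsh2]
        push_cast
        ring

lemma sum_take (m : ℕ) (hm : 1 ≤ m) : ∀ t, t ≤ Nat.fib (m+1) →
    ((((fibWord m).take t).sum : ℕ) : ℤ) = ⌊((t:ℝ)+1)*phi⌋ - 1 := by
  intro t
  induction t with
  | zero =>
    intro _
    simp only [List.take_zero, List.sum_nil, Nat.cast_zero]
    rw [show ((0:ℝ))+1 = (1:ℝ) by norm_num, floor_phi1]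
    norm_num
  | succ t ih =>
    intro ht
    have hlt : t < (fibWord m).length := by rw [length_fibWord]; omega
    rw [List.sum_take_succ _ _ hlt, Nat.cast_add, ih (by omega)]
    have hl := letter t m hm (by omega)
    rw [List.getD_eq_getElem _ _ hlt] at hl
    have hc1 : ((t:ℝ)+2) = (((t+1:ℕ)):ℝ)+1 := by push_cast; ring
    rw [hc1] at hl
    linarith [hl]

lemma rhs_eq (n : ℕ) (hn : 1 ≤ n) (t : ℕ) (ht1 : 1 ≤ t) (ht2 : t ≤ Nat.fib n) :
    ⌊((Nat.fib (n+1) : ℝ) + 1 + t) * phi⌋ - ⌊((Nat.fib (n+1) : ℝ) + 1) * phi⌋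
      = ((((fibWord (n-1)).take t).sum : ℕ) : ℤ) := by
  rcases Nat.eq_or_lt_of_le hn with h1 | h2
  · -- n = 1, t = 1
    have hn1 : n = 1 := h1.symm
    subst hn1
    have ht : t = 1 := by
      have : Nat.fib 1 = 1 := rfl
      omega
    subst ht
    have hf2 : (Nat.fib 2 : ℝ) = 1 := by norm_num [Nat.fib]
    rw [hf2]
    rw [show ((1:ℝ)+1+(1:ℕ)) = (3:ℝ) by push_cast; ring, show ((1:ℝ)+1) = (2:ℝ) by norm_num]
    rw [floor_phi3, floor_phi2]
    decide
  · -- n ≥ 2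
    have hn2 : 2 ≤ n := h2
    have hk3 : 3 ≤ n + 1 := by omega
    have hfib_ineq : Nat.fib n + 1 ≤ Nat.fib (n+1) := by
      have h := Nat.fib_add_two (n := n - 1)
      rw [show n-1+2 = n+1 by omega, show n-1+1 = n by omega] at h
      have : 1 ≤ Nat.fib (n-1) := Nat.fib_pos.mpr (by omega)
      omega
    have hs1 := floor_shift (n+1) hk3 (1+t) (by omega) (by omega)
    have hs2 := floor_shift (n+1) hk3 1 (by omega) (Nat.fib_pos.mpr (by omega))
    have hc1 : ((Nat.fib (n+1) : ℝ) + 1 + t) = (((1+t:ℕ)):ℝ) + (Nat.fib (n+1):ℝ) := by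
      push_cast; ring
    have hc2 : ((Nat.fib (n+1) : ℝ) + 1) = (((1:ℕ)):ℝ) + (Nat.fib (n+1):ℝ) := by
      push_cast; ring
    rw [hc1, hc2, hs1, hs2]
    have hst := sum_take (n-1) (by omega) t (by rw [show n-1+1 = n by omega]; exact ht2)
    rw [hst]
    rw [show (((1:ℕ)):ℝ)*phi = (1:ℝ)*phi by norm_num, floor_phi1]
    rw [show (((1+t:ℕ)):ℝ) = ((t:ℝ)+1) by push_cast; ring]
    ring

def bigL (n : ℕ) : List ℕ :=
  (List.range n).flatMap fun i => (List.replicate 5 (fibWord i)).flatten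

lemma bigL_succ (n : ℕ) : bigL (n+1) = bigL n ++ (List.replicate 5 (fibWord n)).flatten := by
  unfold bigL
  rw [List.range_succ, List.flatMap_append]
  simp

lemma rep5 (w : List ℕ) : (List.replicate 5 w).flatten = w ++ (w ++ (w ++ (w ++ w))) := by
  simp [List.replicate, List.flatten]

lemma length_bigL (n : ℕ) : (bigL n).length = 5 * (Nat.fib (n+2) - 1) := by
  induction n with
  | zero => simp [bigL]
  | succ n ih =>
    rw [bigL_succ, List.length_append, ih, rep5]
    simp only [List.length_append, length_fibWord]
    have hA : Nat.fib (n+1+2) = Nat.fib (n+1) + Nat.fib (n+2) := Nat.fib_add_two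
    have h2 : 1 ≤ Nat.fib (n+2) := Nat.fib_pos.mpr (by omega)
    have h3 : 1 ≤ Nat.fib (n+1) := Nat.fib_pos.mpr (by omega)
    omega

lemma sum_bigL (n : ℕ) : (bigL n).sum = 5 * (Nat.fib (n+3) - 2) := by
  induction n with
  | zero => decide
  | succ n ih =>
    rw [bigL_succ, List.sum_append, ih, rep5]
    simp only [List.sum_append, sum_fibWord]
    have hA : Nat.fib (n+1+3) = Nat.fib (n+2) + Nat.fib (n+3) := Nat.fib_add_two (n := n+2)
    have hB : Nat.fib (n+3) = Nat.fib (n+1) + Nat.fib (n+2) := Nat.fib_add_two (n := n+1)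
    have h2 : 1 ≤ Nat.fib (n+1) := Nat.fib_pos.mpr (by omega)
    have h3 : 1 ≤ Nat.fib (n+2) := Nat.fib_pos.mpr (by omega)
    omega

lemma fib_lb : ∀ i : ℕ, i + 1 ≤ Nat.fib (i+2) := by
  intro i
  induction i with
  | zero => decide
  | succ i ih =>
    have hA : Nat.fib (i+1+2) = Nat.fib (i+1) + Nat.fib (i+2) := Nat.fib_add_two
    have h2 : 1 ≤ Nat.fib (i+1) := Nat.fib_pos.mpr (by omega)
    omega

lemma bigL_prefix : ∀ i M : ℕ, i ≤ M → bigL i <+: bigL M := by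
  intro i M
  induction M with
  | zero =>
    intro hle
    have h0 : i = 0 := by omega
    rw [h0]
  | succ M ih =>
    intro h
    rcases Nat.eq_or_lt_of_le h with h1 | h2
    · subst h1; rfl
    · exact (ih (by omega)).trans ⟨_, (bigL_succ M).symm⟩

lemma cseq_getD_s13 (i M : ℕ) (h1 : 1 ≤ i) (hlen : i - 1 < (bigL M).length) :
    cseq 5 i = (bigL M).getD (i-1) 0 := by
  have hdef : cseq 5 i = (bigL i).getD (i-1) 0 := rfl
  have hleni : i - 1 < (bigL i).length := by
    rw [length_bigL]
    have := fib_lb i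
    omega
  rcases Nat.le_total i M with h | h
  · rw [hdef, getD_prefix (bigL_prefix i M h) hleni]
  · rw [hdef, getD_prefix (bigL_prefix M i h) hlen]

lemma sum_cseq (M : ℕ) : ∀ N, N ≤ (bigL M).length →
    ∑ i ∈ Finset.Ico 1 (N+1), cseq 5 i = ((bigL M).take N).sum := by
  intro N
  induction N with
  | zero => intro _; simp
  | succ N ih =>
    intro hN
    have hlt : N < (bigL M).length := by omega
    rw [Finset.sum_Ico_succ_top (by omega), ih (by omega), List.sum_take_succ _ _ hlt]
    have : cseq 5 (N+1) = (bigL M).getD N 0 := by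
      have := cseq_getD_s13 (N+1) M (by omega) (by simpa using hlt)
      simpa using this
    rw [this, List.getD_eq_getElem _ _ hlt]

lemma take_rep5 (w : List ℕ) (h t : ℕ) (hh : h ≤ 4) (ht : t ≤ w.length) :
    (((List.replicate 5 w).flatten).take (h * w.length + t)).sum
      = h * w.sum + (w.take t).sum := by
  have step : ∀ (r : List ℕ) (s : ℕ), ((w ++ r).take (w.length + s)).sum = w.sum + (r.take s).sum := by
    intro r s
    rw [List.take_append, List.take_of_length_le (by omega), List.sum_append,
      Nat.add_sub_cancel_left]
  have last : ∀ (r : List ℕ), ((w ++ r).take t).sum = (w.take t).sum := by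
    intro r
    rw [List.take_append_of_le_length ht]
  rw [rep5]
  interval_cases h
  · simpa using last _
  · rw [show 1 * w.length + t = w.length + t by ring, step, last]
    ring
  · rw [show 2 * w.length + t = w.length + (w.length + t) by ring, step, step, last]
    ring
  · rw [show 3 * w.length + t = w.length + (w.length + (w.length + t)) by ring, step, step, step,
      last]
    ring
  · rw [show 4 * w.length + t = w.length + (w.length + (w.length + (w.length + t))) by ring,
      step, step, step, step]
    ring

theorem stmt13 (n h t : ℕ) (hn : 1 ≤ n) (hh : h ≤ 4) (ht1 : 1 ≤ t) (ht2 : t ≤ Nat.fib n) :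
    (aseq 5 (5 * (Nat.fib (n + 1) - 1) + h * Nat.fib n + t + 1) : ℤ) =
      5 * Nat.fib (n + 2) - 4 + h * Nat.fib (n + 1) +
        ⌊((Nat.fib (n + 1) : ℝ) + 1 + t) * phi⌋ - ⌊((Nat.fib (n + 1) : ℝ) + 1) * phi⌋ := by

  have hw : fibWord (n-1) = fibWord (n-1) := rfl
  have hlenw : (fibWord (n-1)).length = Nat.fib n := by
    rw [length_fibWord, show n-1+1 = n by omega]
  have hsumw : (fibWord (n-1)).sum = Nat.fib (n+1) := by
    rw [sum_fibWord, show n-1+2 = n+1 by omega]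
  set N := 5 * (Nat.fib (n + 1) - 1) + h * Nat.fib n + t with hN
  -- fib facts
  have hf1 : 1 ≤ Nat.fib n := Nat.fib_pos.mpr (by omega)
  have hf2 : 1 ≤ Nat.fib (n+1) := Nat.fib_pos.mpr (by omega)
  have hfa : Nat.fib (n+2) = Nat.fib n + Nat.fib (n+1) := Nat.fib_add_two
  have hfb : Nat.fib (n+3) = Nat.fib (n+1) + Nat.fib (n+2) := Nat.fib_add_two (n := n+1)
  -- bigL n decomposition
  have hbig : bigL n = bigL (n-1) ++ (List.replicate 5 (fibWord (n-1))).flatten := by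
    have := bigL_succ (n-1)
    rw [show n-1+1 = n by omega] at this
    exact this
  have hlenprev : (bigL (n-1)).length = 5 * (Nat.fib (n+1) - 1) := by
    rw [length_bigL, show n-1+2 = n+1 by omega]
  have hsumprev : (bigL (n-1)).sum = 5 * (Nat.fib (n+2) - 2) := by
    rw [sum_bigL, show n-1+3 = n+2 by omega]
  have hhf : h * Nat.fib n ≤ 4 * Nat.fib n := Nat.mul_le_mul_right _ hh
  have hNlen : N ≤ (bigL n).length := by
    rw [length_bigL]
    omega
  -- compute the partial sum
  have hsum : ((bigL n).take N).sum
      = 5 * (Nat.fib (n+2) - 2) + h * Nat.fib (n+1) + ((fibWord (n-1)).take t).sum := by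
    rw [hbig, List.take_append,
      List.take_of_length_le (by rw [hlenprev]; omega), List.sum_append, hsumprev, hlenprev]
    have hidx : N - 5 * (Nat.fib (n+1) - 1) = h * Nat.fib n + t := by omega
    rw [hidx, ← hlenw]
    rw [take_rep5 (fibWord (n-1)) h t hh (by rw [hlenw]; exact ht2)]
    rw [hsumw]
    ring
  -- aseq value
  have haseq : aseq 5 (N+1) = 6 + ((bigL n).take N).sum := by
    show 5 + 1 + (∑ i ∈ Finset.Ico 1 (N+1), cseq 5 i) = _
    rw [sum_cseq n N hNlen]
  have hrhs := rhs_eq n hn t ht1 ht2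
  have hfib22 : 2 ≤ Nat.fib (n+2) := by omega
  set T := (List.take t (fibWord (n-1))).sum with hT
  rw [haseq, hsum]
  push_cast [Nat.cast_sub hfib22]
  linarith [hrhs]
end
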